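/- Let Ω ⊆ ℝ^D be open, T > 0, ν > 0, and let w : Ω × (0,T) → ℝ^D, u : Ω × (0,T) → ℝ^D, q : Ω × (0,T) → ℝ, f : Ω × (0,T) → ℝ^D be infinitely differentiable and satisfy the GePUP momentum equation ∂w/∂t = f − (u·∇)u − ∇q + νΔw together with the pressure Poisson equation Δq = ∇·(f − (u·∇)u) on Ω × (0,T). Then the divergence of w satisfies the heat equation ∂(∇·w)/∂t = νΔ(∇·w) on Ω × (0,T). -/

import Mathlib

/-- Partial derivative of `f : ℝⁿ → ℝ` in the `i`-th coordinate direction. -/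
noncomputable def pd {n : ℕ} (i : Fin n) (f : (Fin n → ℝ) → ℝ) (x : Fin n → ℝ) : ℝ :=
  deriv (fun s : ℝ => f (Function.update x i s)) (x i)

/-- Laplacian of a scalar field `f : ℝⁿ → ℝ`. -/
noncomputable def lap {n : ℕ} (f : (Fin n → ℝ) → ℝ) (x : Fin n → ℝ) : ℝ :=
  ∑ i : Fin n, pd i (fun y => pd i f y) x

theorem pd_congr {n : ℕ} {i : Fin n} {f g : (Fin n → ℝ) → ℝ} {x : Fin n → ℝ}
    (h : f =ᶠ[nhds x] g) : pd i f x = pd i g x := by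
  unfold pd
  apply Filter.EventuallyEq.deriv_eq
  have : Filter.Tendsto (fun s : ℝ => Function.update x i s) (nhds (x i)) (nhds x) := by
    have := (hasDerivAt_update x i (x i)).continuousAt
    simpa [ContinuousAt, Function.update_eq_self] using this
  exact this.eventually h

theorem pd_eq_fderiv {n : ℕ} {i : Fin n} {f : (Fin n → ℝ) → ℝ} {x : Fin n → ℝ}
    (hf : DifferentiableAt ℝ f x) : pd i f x = fderiv ℝ f x (Pi.single i 1) := by
  unfold pd
  have h3 : HasFDerivAt f (fderiv ℝ f x) (Function.update x i (x i)) := by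
    simpa [Function.update_eq_self] using hf.hasFDerivAt
  exact (h3.comp_hasDerivAt (x i) (hasDerivAt_update x i (x i))).deriv

-- time deriv as fderiv of pair function
theorem deriv_eq_fderiv_pair {n : ℕ} {F : (Fin n → ℝ) × ℝ → ℝ} {x : Fin n → ℝ} {t : ℝ}
    (hF : DifferentiableAt ℝ F (x, t)) :
    deriv (fun s => F (x, s)) t = fderiv ℝ F (x, t) (0, 1) := by
  have h1 : HasDerivAt (fun s : ℝ => ((x, s) : (Fin n → ℝ) × ℝ)) (0, 1) t :=
    (hasDerivAt_const t x).prodMk (hasDerivAt_id t)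
  exact (hF.hasFDerivAt.comp_hasDerivAt t h1).deriv

-- spatial pd of pair function
theorem pd_eq_fderiv_pair {n : ℕ} {F : (Fin n → ℝ) × ℝ → ℝ} {x : Fin n → ℝ} {t : ℝ} {i : Fin n}
    (hF : DifferentiableAt ℝ F (x, t)) :
    pd i (fun y => F (y, t)) x = fderiv ℝ F (x, t) (Pi.single i 1, 0) := by
  have h1 : DifferentiableAt ℝ (fun y : Fin n → ℝ => F (y, t)) x :=
    hF.comp x (hasFDerivAt_prodMk_left x t).differentiableAt
  rw [pd_eq_fderiv h1]
  have h2 : HasFDerivAt (fun y : Fin n → ℝ => (y, t))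
      (ContinuousLinearMap.inl ℝ (Fin n → ℝ) ℝ) x := hasFDerivAt_prodMk_left x t
  have h3 : HasFDerivAt (fun y : Fin n → ℝ => F (y, t))
      ((fderiv ℝ F (x, t)).comp (ContinuousLinearMap.inl ℝ (Fin n → ℝ) ℝ)) x :=
    hF.hasFDerivAt.comp x h2
  rw [h3.fderiv]
  simp

-- commuting directional derivatives: general
open scoped ContDiff in
theorem fderiv_comm' {E : Type*} [NormedAddCommGroup E] [NormedSpace ℝ E]
    {F : E → ℝ} {p : E} (hF : ContDiffAt ℝ ∞ F p) (v w : E) :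
    fderiv ℝ (fun q => fderiv ℝ F q v) p w = fderiv ℝ (fun q => fderiv ℝ F q w) p v := by
  have hd : DifferentiableAt ℝ (fderiv ℝ F) p := by
    have : ContDiffAt ℝ 1 (fderiv ℝ F) p := hF.fderiv_right (by decide)
    exact this.differentiableAt one_ne_zero
  have key : ∀ v w : E, fderiv ℝ (fun q => fderiv ℝ F q v) p w
      = fderiv ℝ (fderiv ℝ F) p w v := by
    intro v w
    have h2 : HasFDerivAt (fun q => fderiv ℝ F q v)
        (((ContinuousLinearMap.apply ℝ ℝ v)).comp (fderiv ℝ (fderiv ℝ F) p)) p :=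
      (ContinuousLinearMap.apply ℝ ℝ v).hasFDerivAt.comp p hd.hasFDerivAt
    rw [h2.fderiv]
    simp
  rw [key, key]
  have hsym : IsSymmSndFDerivAt ℝ F p := hF.isSymmSndFDerivAt (by simp; exact WithTop.coe_le_coe.2 le_top)
  exact hsym w v

section helpers

open Filter Topology

-- 1D slice differentiability
theorem diffAt_slice {n : ℕ} {f : (Fin n → ℝ) → ℝ} {x : Fin n → ℝ} {i : Fin n}
    (hf : DifferentiableAt ℝ f x) :
    DifferentiableAt ℝ (fun s : ℝ => f (Function.update x i s)) (x i) := by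
  have h3 : HasFDerivAt f (fderiv ℝ f x) (Function.update x i (x i)) := by
    simpa [Function.update_eq_self] using hf.hasFDerivAt
  exact (h3.comp_hasDerivAt (x i) (hasDerivAt_update x i (x i))).differentiableAt

theorem pd_sub {n : ℕ} {f g : (Fin n → ℝ) → ℝ} {x : Fin n → ℝ} {i : Fin n}
    (hf : DifferentiableAt ℝ f x) (hg : DifferentiableAt ℝ g x) :
    pd i (fun y => f y - g y) x = pd i f x - pd i g x := by
  unfold pd; exact deriv_sub (diffAt_slice hf) (diffAt_slice hg)

theorem pd_add {n : ℕ} {f g : (Fin n → ℝ) → ℝ} {x : Fin n → ℝ} {i : Fin n}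
    (hf : DifferentiableAt ℝ f x) (hg : DifferentiableAt ℝ g x) :
    pd i (fun y => f y + g y) x = pd i f x + pd i g x := by
  unfold pd; exact deriv_add (diffAt_slice hf) (diffAt_slice hg)

theorem pd_const_mul {n : ℕ} {g : (Fin n → ℝ) → ℝ} {x : Fin n → ℝ} {i : Fin n} (c : ℝ)
    (hg : DifferentiableAt ℝ g x) :
    pd i (fun y => c * g y) x = c * pd i g x := by
  unfold pd; exact deriv_const_mul c (diffAt_slice hg)

theorem pd_sum {n m : ℕ} {f : Fin m → (Fin n → ℝ) → ℝ} {x : Fin n → ℝ} {i : Fin n}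
    (hf : ∀ j, DifferentiableAt ℝ (f j) x) :
    pd i (fun y => ∑ j : Fin m, f j y) x = ∑ j : Fin m, pd i (f j) x := by
  unfold pd
  rw [← deriv_fun_sum (fun j _ => diffAt_slice (hf j))]

end helpers

section spatial
open Filter Topology ContDiff

variable {n : ℕ} {Ω : Set (Fin n → ℝ)}

theorem pd_eq_fderiv_on (hΩ : IsOpen Ω) {g : (Fin n → ℝ) → ℝ} (hg : ContDiffOn ℝ ∞ g Ω)
    (k : Fin n) {y : Fin n → ℝ} (hy : y ∈ Ω) : pd k g y = fderiv ℝ g y (Pi.single k 1) :=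
  pd_eq_fderiv ((hg.contDiffAt (hΩ.mem_nhds hy)).differentiableAt (by decide))

theorem contDiffOn_pd (hΩ : IsOpen Ω) {g : (Fin n → ℝ) → ℝ} (hg : ContDiffOn ℝ ∞ g Ω)
    (k : Fin n) : ContDiffOn ℝ ∞ (pd k g) Ω := by
  have h1 : ContDiffOn ℝ ∞ (fderiv ℝ g) Ω :=
    hg.fderiv_of_isOpen hΩ (le_of_eq rfl)
  have h2 : ContDiffOn ℝ ∞ (fun y => fderiv ℝ g y (Pi.single k 1)) Ω := by
    have := ((ContinuousLinearMap.apply ℝ ℝ (Pi.single k (1:ℝ))).contDiff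
      (n := ∞)).comp_contDiffOn h1
    exact this
  exact h2.congr fun y hy => pd_eq_fderiv_on hΩ hg k hy

theorem contDiffOn_lap (hΩ : IsOpen Ω) {g : (Fin n → ℝ) → ℝ} (hg : ContDiffOn ℝ ∞ g Ω) :
    ContDiffOn ℝ ∞ (lap g) Ω := by
  have : ContDiffOn ℝ ∞ (fun y => ∑ i : Fin n, pd i (pd i g) y) Ω :=
    ContDiffOn.sum fun i _ => contDiffOn_pd hΩ (contDiffOn_pd hΩ hg i) i
  exact this.congr fun y hy => rfl

-- spatial Clairaut
theorem pd_comm (hΩ : IsOpen Ω) {g : (Fin n → ℝ) → ℝ} (hg : ContDiffOn ℝ ∞ g Ω)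
    (a b : Fin n) {x : Fin n → ℝ} (hx : x ∈ Ω) :
    pd a (pd b g) x = pd b (pd a g) x := by
  have hmem : Ω ∈ nhds x := hΩ.mem_nhds hx
  have hCA : ContDiffAt ℝ ∞ g x := hg.contDiffAt hmem
  have e1 : pd a (pd b g) x = pd a (fun y => fderiv ℝ g y (Pi.single b 1)) x :=
    pd_congr (by filter_upwards [hmem] with y hy using pd_eq_fderiv_on hΩ hg b hy)
  have e2 : pd b (pd a g) x = pd b (fun y => fderiv ℝ g y (Pi.single a 1)) x :=
    pd_congr (by filter_upwards [hmem] with y hy using pd_eq_fderiv_on hΩ hg a hy)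
  have hdb : ContDiffAt ℝ ∞ (fun y => fderiv ℝ g y (Pi.single b 1)) x :=
    ((ContinuousLinearMap.apply ℝ ℝ (Pi.single b (1:ℝ))).contDiff.contDiffAt).comp x
      (hCA.fderiv_right (le_of_eq rfl))
  have hda : ContDiffAt ℝ ∞ (fun y => fderiv ℝ g y (Pi.single a 1)) x :=
    ((ContinuousLinearMap.apply ℝ ℝ (Pi.single a (1:ℝ))).contDiff.contDiffAt).comp x
      (hCA.fderiv_right (le_of_eq rfl))
  rw [e1, e2, pd_eq_fderiv (hdb.differentiableAt (by decide)),
    pd_eq_fderiv (hda.differentiableAt (by decide))]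
  exact fderiv_comm' hCA (Pi.single b 1) (Pi.single a 1)

end spatial

open scoped ContDiff in
/-- If `w` satisfies the GePUP momentum equation
`∂w/∂t = f − (u·∇)u − ∇q + νΔw` together with the pressure Poisson equation
`Δq = ∇·(f − (u·∇)u)` on `Ω × (0,T)`, then `∇·w` satisfies the heat
equation `∂(∇·w)/∂t = νΔ(∇·w)`. -/
theorem gepup_divergence_heat_equation
    (D : ℕ) (Ω : Set (Fin D → ℝ)) (hΩ : IsOpen Ω) (T ν : ℝ) (hT : 0 < T) (hν : 0 < ν)
    (w : (Fin D → ℝ) → ℝ → Fin D → ℝ) (u : (Fin D → ℝ) → ℝ → Fin D → ℝ)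
    (q : (Fin D → ℝ) → ℝ → ℝ) (f : (Fin D → ℝ) → ℝ → Fin D → ℝ)
    (hw : ContDiffOn ℝ (⊤ : ℕ∞) (fun pr : (Fin D → ℝ) × ℝ => w pr.1 pr.2) (Ω ×ˢ Set.Ioo 0 T))
    (hu : ContDiffOn ℝ (⊤ : ℕ∞) (fun pr : (Fin D → ℝ) × ℝ => u pr.1 pr.2) (Ω ×ˢ Set.Ioo 0 T))
    (hq : ContDiffOn ℝ (⊤ : ℕ∞) (fun pr : (Fin D → ℝ) × ℝ => q pr.1 pr.2) (Ω ×ˢ Set.Ioo 0 T))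
    (hf : ContDiffOn ℝ (⊤ : ℕ∞) (fun pr : (Fin D → ℝ) × ℝ => f pr.1 pr.2) (Ω ×ˢ Set.Ioo 0 T))
    (hmom : ∀ x ∈ Ω, ∀ t ∈ Set.Ioo (0 : ℝ) T, ∀ i : Fin D,
      deriv (fun s => w x s i) t
        = f x t i - ∑ k : Fin D, u x t k * pd k (fun y => u y t i) x
            - pd i (fun y => q y t) x + ν * lap (fun y => w y t i) x)
    (hppe : ∀ x ∈ Ω, ∀ t ∈ Set.Ioo (0 : ℝ) T,
      lap (fun y => q y t) x
        = ∑ i : Fin D,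
            pd i (fun y => f y t i - ∑ k : Fin D, u y t k * pd k (fun z => u z t i) y) x) :
    ∀ x ∈ Ω, ∀ t ∈ Set.Ioo (0 : ℝ) T,
      deriv (fun s => ∑ i : Fin D, pd i (fun y => w y s i) x) t
        = ν * lap (fun y => ∑ i : Fin D, pd i (fun z => w z t i) y) x := by
  intro x hx t ht
  set U : Set ((Fin D → ℝ) × ℝ) := Ω ×ˢ Set.Ioo 0 T with hUdef
  have hU : IsOpen U := hΩ.prod isOpen_Ioo
  have hxt : (x, t) ∈ U := ⟨hx, ht⟩
  have hmemx : Ω ∈ nhds x := hΩ.mem_nhds hx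
  have hmemt : Set.Ioo (0:ℝ) T ∈ nhds t := isOpen_Ioo.mem_nhds ht
  -- component pair functions
  set W : Fin D → ((Fin D → ℝ) × ℝ) → ℝ := fun i pr => w pr.1 pr.2 i with hWdef
  have hW : ∀ i, ContDiffOn ℝ ∞ (W i) U := by
    intro i
    have h1 : ContDiffOn ℝ ∞ (fun pr : (Fin D → ℝ) × ℝ => w pr.1 pr.2) U := hw.of_le (by simp)
    exact ((ContinuousLinearMap.proj (R := ℝ) (φ := fun _ : Fin D => ℝ) i).contDiff
      (n := ∞)).comp_contDiffOn h1
  have hWat : ∀ i, ∀ pr ∈ U, ContDiffAt ℝ ∞ (W i) pr := fun i pr hpr =>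
    (hW i).contDiffAt (hU.mem_nhds hpr)
  -- A i = spatial i-derivative of w_i as pair function; B i = time derivative
  set A : Fin D → ((Fin D → ℝ) × ℝ) → ℝ :=
    fun i p => fderiv ℝ (W i) p (Pi.single i 1, 0) with hAdef
  set B : Fin D → ((Fin D → ℝ) × ℝ) → ℝ := fun i p => fderiv ℝ (W i) p (0, 1) with hBdef
  have hA : ∀ i, ∀ pr ∈ U, ContDiffAt ℝ ∞ (A i) pr := fun i pr hpr =>
    ((ContinuousLinearMap.apply ℝ ℝ ((Pi.single i 1, 0) : (Fin D → ℝ) × ℝ)).contDiff.contDiffAt).comp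
      pr ((hWat i pr hpr).fderiv_right (le_of_eq rfl))
  have hB : ∀ i, ∀ pr ∈ U, ContDiffAt ℝ ∞ (B i) pr := fun i pr hpr =>
    ((ContinuousLinearMap.apply ℝ ℝ (((0 : Fin D → ℝ), (1:ℝ)))).contDiff.contDiffAt).comp
      pr ((hWat i pr hpr).fderiv_right (le_of_eq rfl))
  -- Step 1: rewrite the time-function eventually
  have step1 : (fun s => ∑ i : Fin D, pd i (fun y => w y s i) x)
      =ᶠ[nhds t] (fun s => ∑ i : Fin D, A i (x, s)) := by
    filter_upwards [hmemt] with s hs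
    refine Finset.sum_congr rfl fun i _ => ?_
    exact pd_eq_fderiv_pair (F := W i)
      (((hWat i (x, s) ⟨hx, hs⟩)).differentiableAt (by decide))
  rw [step1.deriv_eq]
  -- Step 2: differentiate the sum term by term
  have hcurve : DifferentiableAt ℝ (fun s : ℝ => ((x, s) : (Fin D → ℝ) × ℝ)) t :=
    ((hasDerivAt_const t x).prodMk (hasDerivAt_id t)).differentiableAt
  have hAx : ∀ i : Fin D, DifferentiableAt ℝ (fun s => A i (x, s)) t := fun i =>
    (((hA i (x, t) hxt)).differentiableAt (by decide)).comp t hcurve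
  rw [deriv_fun_sum (fun i _ => hAx i)]
  -- Step 3-7: per-component identification with pd i of momentum RHS
  have key : ∀ i : Fin D, deriv (fun s => A i (x, s)) t
      = pd i (fun y => f y t i - ∑ k : Fin D, u y t k * pd k (fun z => u z t i) y
          - pd i (fun z => q z t) y + ν * lap (fun z => w z t i) y) x := by
    intro i
    have s3 : deriv (fun s => A i (x, s)) t = fderiv ℝ (A i) (x, t) (0, 1) :=
      deriv_eq_fderiv_pair ((hA i (x, t) hxt).differentiableAt (by decide))
    have s4 : fderiv ℝ (A i) (x, t) (0, 1) = fderiv ℝ (B i) (x, t) (Pi.single i 1, 0) :=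
      fderiv_comm' (hWat i (x, t) hxt) (Pi.single i 1, 0) (0, 1)
    have s5 : fderiv ℝ (B i) (x, t) (Pi.single i 1, 0) = pd i (fun y => B i (y, t)) x :=
      (pd_eq_fderiv_pair ((hB i (x, t) hxt).differentiableAt (by decide))).symm
    have s6 : pd i (fun y => B i (y, t)) x
        = pd i (fun y => deriv (fun s => w y s i) t) x := by
      apply pd_congr
      filter_upwards [hmemx] with y hy
      exact (deriv_eq_fderiv_pair (F := W i)
        ((hWat i (y, t) ⟨hy, ht⟩).differentiableAt (by decide))).symm
    have s7 : pd i (fun y => deriv (fun s => w y s i) t) x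
        = pd i (fun y => f y t i - ∑ k : Fin D, u y t k * pd k (fun z => u z t i) y
            - pd i (fun z => q z t) y + ν * lap (fun z => w z t i) y) x := by
      apply pd_congr
      filter_upwards [hmemx] with y hy
      exact hmom y hy t ht i
    rw [s3, s4, s5, s6, s7]
  simp only [key]
  -- Spatial part
  -- slice smoothness
  have hslice : ∀ {G : ((Fin D → ℝ) × ℝ) → ℝ}, ContDiffOn ℝ ∞ G U →
      ContDiffOn ℝ ∞ (fun y => G (y, t)) Ω := by
    intro G hG
    exact hG.comp ((contDiff_id.prodMk contDiff_const).contDiffOn) (fun y hy => ⟨hy, ht⟩)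
  have hQt : ContDiffOn ℝ ∞ (fun y => q y t) Ω := hslice (hq.of_le (by simp))
  have hWt : ∀ i : Fin D, ContDiffOn ℝ ∞ (fun y => w y t i) Ω := fun i => hslice (hW i)
  have hUt : ∀ i : Fin D, ContDiffOn ℝ ∞ (fun y => u y t i) Ω := by
    intro i
    have h1 : ContDiffOn ℝ ∞ (fun pr : (Fin D → ℝ) × ℝ => u pr.1 pr.2) U := hu.of_le (by simp)
    exact hslice (((ContinuousLinearMap.proj (R := ℝ) (φ := fun _ : Fin D => ℝ) i).contDiff
      (n := ∞)).comp_contDiffOn h1)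
  have hFt : ∀ i : Fin D, ContDiffOn ℝ ∞ (fun y => f y t i) Ω := by
    intro i
    have h1 : ContDiffOn ℝ ∞ (fun pr : (Fin D → ℝ) × ℝ => f pr.1 pr.2) U := hf.of_le (by simp)
    exact hslice (((ContinuousLinearMap.proj (R := ℝ) (φ := fun _ : Fin D => ℝ) i).contDiff
      (n := ∞)).comp_contDiffOn h1)
  have hconv : ∀ i : Fin D,
      ContDiffOn ℝ ∞ (fun y => ∑ k : Fin D, u y t k * pd k (fun z => u z t i) y) Ω :=
    fun i => ContDiffOn.sum fun k _ => (hUt k).mul (contDiffOn_pd hΩ (hUt i) k)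
  have dA : ∀ {g : (Fin D → ℝ) → ℝ}, ContDiffOn ℝ ∞ g Ω → ∀ {y}, y ∈ Ω →
      DifferentiableAt ℝ g y := by
    intro g hg y hy
    exact (hg.contDiffAt (hΩ.mem_nhds hy)).differentiableAt (by decide)
  -- split each pd via linearity
  have split : ∀ i : Fin D,
      pd i (fun y => f y t i - ∑ k : Fin D, u y t k * pd k (fun z => u z t i) y
          - pd i (fun z => q z t) y + ν * lap (fun z => w z t i) y) x
      = pd i (fun y => f y t i - ∑ k : Fin D, u y t k * pd k (fun z => u z t i) y) x
        - pd i (pd i (fun z => q z t)) x + ν * pd i (lap (fun z => w z t i)) x := by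
    intro i
    have d1 : DifferentiableAt ℝ
        (fun y => f y t i - ∑ k : Fin D, u y t k * pd k (fun z => u z t i) y) x :=
      (dA (hFt i) hx).sub (dA (hconv i) hx)
    have d2 : DifferentiableAt ℝ (pd i (fun z => q z t)) x := dA (contDiffOn_pd hΩ hQt i) hx
    have d3 : DifferentiableAt ℝ (lap (fun z => w z t i)) x := dA (contDiffOn_lap hΩ (hWt i)) hx
    rw [pd_add (f := fun y => f y t i - ∑ k : Fin D, u y t k * pd k (fun z => u z t i) y
        - pd i (fun z => q z t) y) (g := fun y => ν * lap (fun z => w z t i) y) (d1.sub d2) ((differentiableAt_const ν).mul d3),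
      pd_sub d1 d2, pd_const_mul ν d3]
  simp only [split]
  rw [Finset.sum_add_distrib, Finset.sum_sub_distrib]
  rw [← hppe x hx t ht]
  have hlapq : lap (fun y => q y t) x = ∑ i : Fin D, pd i (pd i (fun z => q z t)) x := rfl
  rw [hlapq]
  simp only [sub_self, zero_add, ← Finset.mul_sum]
  congr 1
  -- third-order commutation
  have third : ∀ i j : Fin D,
      pd i (pd j (pd j (fun z => w z t i))) x = pd j (pd j (pd i (fun z => w z t i))) x := by
    intro i j
    have h1 : pd i (pd j (pd j (fun z => w z t i))) x
        = pd j (pd i (pd j (fun z => w z t i))) x :=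
      pd_comm hΩ (contDiffOn_pd hΩ (hWt i) j) i j hx
    have h2 : pd j (pd i (pd j (fun z => w z t i))) x
        = pd j (pd j (pd i (fun z => w z t i))) x := by
      apply pd_congr
      filter_upwards [hmemx] with y hy
      exact pd_comm hΩ (hWt i) i j hy
    rw [h1, h2]
  -- LHS: ∑ i pd i (lap Wt i) = ∑ i ∑ j pd i pd j pd j Wt i
  have lhs_eq : ∑ i : Fin D, pd i (lap (fun z => w z t i)) x
      = ∑ i : Fin D, ∑ j : Fin D, pd i (pd j (pd j (fun z => w z t i))) x := by
    refine Finset.sum_congr rfl fun i _ => ?_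
    have : lap (fun z => w z t i) = fun y => ∑ j : Fin D, pd j (pd j (fun z => w z t i)) y := rfl
    rw [this, pd_sum (fun j => dA (contDiffOn_pd hΩ (contDiffOn_pd hΩ (hWt i) j) j) hx)]
  -- RHS: lap (div w) = ∑ j ∑ i pd j pd j pd i Wt i
  have rhs_eq : lap (fun y => ∑ i : Fin D, pd i (fun z => w z t i) y) x
      = ∑ j : Fin D, ∑ i : Fin D, pd j (pd j (pd i (fun z => w z t i))) x := by
    have hlap : lap (fun y => ∑ i : Fin D, pd i (fun z => w z t i) y) x
        = ∑ j : Fin D, pd j (pd j (fun y => ∑ i : Fin D, pd i (fun z => w z t i) y)) x := rfl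
    rw [hlap]
    refine Finset.sum_congr rfl fun j _ => ?_
    have e1 : pd j (pd j (fun y => ∑ i : Fin D, pd i (fun z => w z t i) y)) x
        = pd j (fun y => ∑ i : Fin D, pd j (pd i (fun z => w z t i)) y) x := by
      apply pd_congr
      filter_upwards [hmemx] with y hy
      exact pd_sum (fun i => dA (contDiffOn_pd hΩ (hWt i) i) hy)
    rw [e1, pd_sum (fun i => dA (contDiffOn_pd hΩ (contDiffOn_pd hΩ (hWt i) i) j) hx)]
  rw [lhs_eq, rhs_eq, Finset.sum_comm]
  exact Finset.sum_congr rfl fun i _ => Finset.sum_congr rfl fun j _ => third j i
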